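/- Let m and e be integers with e < 0. Then the tetrahedral index satisfies I_Δ(m,e) = (u^{m·e}/(q^{e};q)_{-e}) · Σ_{n=0}^{∞} (-1)^n q^{n(n-1)/2 + n(1-e-m)} / ((q;q)_n · (q^{-e+1};q)_n), where the series on the right converges absolutely and (q^{e};q)_{-e} = ∏_{i=0}^{-e-1}(1 - q^{e+i}) is nonzero. (This identifies I_Δ(m,e) with q^{me/2}/(q^{e};q)_{-e} times the basic hypergeometric series ₁φ₁(0; q^{-e+1}; q, q^{1-e-m}).) -/

import Mathlib

open scoped BigOperators

/-- Finite q-Pochhammer symbol `(a;q)_n = ∏_{i=0}^{n-1} (1 - a q^i)`. -/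
noncomputable def qPoch (a q : ℂ) (n : ℕ) : ℂ :=
  ∏ i ∈ Finset.range n, (1 - a * q ^ i)

/-- Infinite q-Pochhammer symbol `(a;q)_∞ = ∏_{i=0}^{∞} (1 - a q^i)`. -/
noncomputable def qPochInf (a q : ℂ) : ℂ :=
  ∏' i : ℕ, (1 - a * q ^ i)

/-- The `n`-th term of the series defining the tetrahedral index `I_Δ(m,e)`,
with `q = u^2` and vanishing below `e₊ = max(-e,0)`. -/
noncomputable def tetTerm (u : ℂ) (m e : ℤ) (n : ℕ) : ℂ :=
  if (-e).toNat ≤ n then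
    (-1 : ℂ) ^ n * u ^ ((n : ℤ) * ((n : ℤ) + 1) - (2 * (n : ℤ) + e) * m) /
      (qPoch (u ^ 2) (u ^ 2) n * qPoch (u ^ 2) (u ^ 2) ((n : ℤ) + e).toNat)
  else 0

/-- The tetrahedral index `I_Δ(m,e) = Σ_{n=e₊}^∞ (-1)^n u^{n(n+1)-(2n+e)m}/((q;q)_n (q;q)_{n+e})`. -/
noncomputable def tetIndex (u : ℂ) (m e : ℤ) : ℂ := ∑' n : ℕ, tetTerm u m e n

/-!
For `e = -E ≤ 0` the summands with `n < E` vanish, and after the shift `n = k + E` the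
factor `(q;q)_{k+E}` splits as `(q;q)_E (q^{E+1};q)_k`. The reflection formula
`(q;q)_E = (-1)^E q^{E(E+1)/2} (q^{-E};q)_E` then turns the `k`-th shifted summand into
`u^{me}/(q^{-E};q)_E` times the `k`-th term of `₁φ₁(0; q^{E+1}; q, q^{1+E-m})`; the latter series
converges absolutely by the ratio test, the ratio of consecutive terms being `O(q^k)`.
-/

open Finset Filter Topology

lemma qPoch_succ (a q : ℂ) (n : ℕ) : qPoch a q (n + 1) = qPoch a q n * (1 - a * q ^ n) :=
  prod_range_succ _ _

lemma qPoch_add (a q : ℂ) (m n : ℕ) :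
    qPoch a q (m + n) = qPoch a q m * qPoch (a * q ^ m) q n := by
  simp only [qPoch, prod_range_add, pow_add, mul_assoc]

lemma qPoch_ne_zero {a q : ℂ} (ha : ‖a‖ < 1) (hq : ‖q‖ ≤ 1) (n : ℕ) : qPoch a q n ≠ 0 := by
  refine prod_ne_zero_iff.2 fun i _ h => ?_
  have hlt : ‖a * q ^ i‖ < 1 := by
    rw [norm_mul, norm_pow]
    exact (mul_le_of_le_one_right (norm_nonneg a) (pow_le_one₀ (norm_nonneg q) hq)).trans_lt ha
  rw [← sub_eq_zero.1 h, norm_one] at hlt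
  exact hlt.false

lemma qPoch_self_eq_neg_one_pow_mul (q : ℂ) (hq : q ≠ 0) (n : ℕ) :
    qPoch q q n = (-1) ^ n * q ^ (∑ i ∈ range (n + 1), i) * qPoch (q ^ (-(n : ℤ))) q n := by
  induction n with
  | zero => simp [qPoch]
  | succ n ih =>
    have hshift : qPoch (q ^ (-((n + 1 : ℕ) : ℤ))) q (n + 1) =
        qPoch (q ^ (-(n : ℤ))) q n * (1 - (q ^ (n + 1))⁻¹) := by
      rw [qPoch, prod_range_succ', qPoch]
      congr 1
      · refine prod_congr rfl fun i _ => ?_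
        rw [pow_succ, mul_comm (q ^ i) q, ← mul_assoc, ← zpow_add_one₀ hq]
        push_cast
        ring_nf
      · rw [pow_zero, mul_one, zpow_neg, zpow_natCast]
    have hfactor : q ^ (n + 1) * (1 - (q ^ (n + 1))⁻¹) = -(1 - q * q ^ n) := by
      field_simp
      ring
    rw [qPoch_succ, ih, hshift, sum_range_succ _ (n + 1), pow_add]
    linear_combination (-1) ^ n * q ^ (∑ i ∈ range (n + 1), i) * qPoch (q ^ (-(n : ℤ))) q n * hfactor

lemma qPoch_zpow_neg_ne_zero {q : ℂ} (hq0 : q ≠ 0) (hq : ‖q‖ < 1) (n : ℕ) :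
    qPoch (q ^ (-(n : ℤ))) q n ≠ 0 :=
  right_ne_zero_of_mul (qPoch_self_eq_neg_one_pow_mul q hq0 n ▸ qPoch_ne_zero hq hq.le n)

lemma two_mul_triangle (n : ℕ) : 2 * ((n * (n - 1) / 2 : ℕ) : ℤ) = n * (n - 1) := by
  induction n with
  | zero => simp
  | succ n ih =>
    rw [Nat.triangle_succ, Nat.cast_add, Nat.cast_succ]
    linear_combination ih

/-- The `n`-th term of `₁φ₁(0; b; q, q^c)`. -/
noncomputable def phi11Term (q b : ℂ) (c : ℤ) (n : ℕ) : ℂ :=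
  (-1) ^ n * q ^ (((n * (n - 1) / 2 : ℕ) : ℤ) + (n : ℤ) * c) / (qPoch q q n * qPoch b q n)

lemma phi11Term_succ {q : ℂ} (hq : q ≠ 0) (b : ℂ) (c : ℤ) (n : ℕ) :
    phi11Term q b c (n + 1) =
      phi11Term q b c n * (-(q ^ c * q ^ n) / ((1 - q * q ^ n) * (1 - b * q ^ n))) := by
  have hexp : (((n + 1) * (n + 1 - 1) / 2 : ℕ) : ℤ) + ((n + 1 : ℕ) : ℤ) * c =
      (((n * (n - 1) / 2 : ℕ) : ℤ) + (n : ℤ) * c) + c + n := by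
    rw [Nat.triangle_succ]
    push_cast
    ring
  rw [phi11Term, phi11Term, hexp, zpow_add₀ hq, zpow_add₀ hq, zpow_natCast, qPoch_succ,
    qPoch_succ]
  simp only [div_eq_mul_inv, mul_inv]
  ring

lemma summable_norm_phi11Term {q b : ℂ} (hq0 : q ≠ 0) (hq : ‖q‖ < 1) (hb : ‖b‖ < 1) (c : ℤ) :
    Summable fun n => ‖phi11Term q b c n‖ := by
  have hne : ∀ n, phi11Term q b c n ≠ 0 := fun n =>
    div_ne_zero (mul_ne_zero (pow_ne_zero _ (by norm_num)) (zpow_ne_zero _ hq0))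
      (mul_ne_zero (qPoch_ne_zero hq hq.le n) (qPoch_ne_zero hb hq.le n))
  have hpow : Tendsto (fun n => q ^ n) atTop (𝓝 0) := tendsto_pow_atTop_nhds_zero_of_norm_lt_one hq
  have hratio : Tendsto (fun n => -(q ^ c * q ^ n) / ((1 - q * q ^ n) * (1 - b * q ^ n)))
      atTop (𝓝 0) := by
    have hlim := (hpow.const_mul (q ^ c)).neg.div
      (((hpow.const_mul q).const_sub 1).mul ((hpow.const_mul b).const_sub 1)) (by simp)
    simp only [mul_zero, neg_zero, zero_div] at hlim
    exact hlim
  refine summable_of_ratio_test_tendsto_lt_one zero_lt_one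
    (Eventually.of_forall fun n => norm_ne_zero_iff.2 (hne n)) ?_
  simpa [phi11Term_succ hq0, norm_mul, hne] using hratio.norm

lemma tetTerm_eq_zero_of_lt {u : ℂ} {m e : ℤ} {n : ℕ} (hn : n < (-e).toNat) :
    tetTerm u m e n = 0 :=
  if_neg (not_le.2 hn)

lemma tetTerm_add_toNat_neg {u : ℂ} (hu : u ≠ 0) (m : ℤ) {e : ℤ} (he : e ≤ 0) (k : ℕ) :
    tetTerm u m e (k + (-e).toNat) = u ^ (m * e) / qPoch ((u ^ 2) ^ e) (u ^ 2) (-e).toNat *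
      phi11Term (u ^ 2) ((u ^ 2) ^ (-e + 1)) (1 - e - m) k := by
  obtain ⟨E, rfl⟩ := Int.exists_eq_neg_ofNat he
  rw [tetTerm]
  simp only [neg_neg, Int.toNat_natCast]
  have hq : u ^ 2 ≠ 0 := pow_ne_zero 2 hu
  have hb : (u ^ 2) ^ ((E : ℤ) + 1) = u ^ 2 * (u ^ 2) ^ E := by
    rw [zpow_add_one₀ hq, zpow_natCast, mul_comm]
  have hsq : ∀ z : ℤ, (u ^ 2) ^ z = u ^ (2 * z) := fun z => by
    rw [zpow_mul]
    norm_cast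
  have hk : (((k + E : ℕ) : ℤ) + -E).toNat = k := by omega
  have hS : 2 * ((∑ i ∈ range (E + 1), i : ℕ) : ℤ) = (E + 1) * E := by
    rw [sum_range_id, two_mul_triangle]
    push_cast
    ring
  have hX : ((E + k : ℕ) : ℤ) * (((E + k : ℕ) : ℤ) + 1) - (2 * ((E + k : ℕ) : ℤ) + -E) * m =
      m * -E + 2 * (((k * (k - 1) / 2 : ℕ) : ℤ) + (k : ℤ) * (1 - -(E : ℤ) - m)) +
        ((2 * ∑ i ∈ range (E + 1), i : ℕ) : ℤ) := by
    simp only [Nat.cast_add, Nat.cast_mul, Nat.cast_ofNat]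
    linear_combination -two_mul_triangle k - hS
  rw [if_pos (Nat.le_add_left _ _), hk, add_comm k E, qPoch_add, ← hb,
    qPoch_self_eq_neg_one_pow_mul _ hq E, phi11Term, hX, zpow_add₀ hu, zpow_add₀ hu,
    hsq (((k * (k - 1) / 2 : ℕ) : ℤ) + (k : ℤ) * (1 - -(E : ℤ) - m)),
    zpow_natCast, pow_mul]
  field_simp
  ring

/-- for `e < 0`, `I_Δ(m,e)` equals `u^{me}/(q^e;q)_{-e}` times the absolutely
convergent series `Σ_n (-1)^n q^{n(n-1)/2 + n(1-e-m)}/((q;q)_n (q^{-e+1};q)_n)`,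
with `(q^e;q)_{-e} ≠ 0`. -/
theorem stmt_1 (u : ℂ) (hu0 : 0 < ‖u‖) (hu1 : ‖u‖ < 1) (q : ℂ) (hq : q = u ^ 2)
    (m e : ℤ) (he : e < 0) :
    Summable (fun n : ℕ =>
      ‖(-1 : ℂ) ^ n * q ^ (((n * (n - 1) / 2 : ℕ) : ℤ) + (n : ℤ) * (1 - e - m)) /
        (qPoch q q n * qPoch (q ^ (-e + 1)) q n)‖) ∧
    qPoch (q ^ e) q (-e).toNat ≠ 0 ∧
    tetIndex u m e =
      u ^ (m * e) / qPoch (q ^ e) q (-e).toNat *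
        ∑' n : ℕ, (-1 : ℂ) ^ n * q ^ (((n * (n - 1) / 2 : ℕ) : ℤ) + (n : ℤ) * (1 - e - m)) /
          (qPoch q q n * qPoch (q ^ (-e + 1)) q n) := by
  subst hq
  have hu : u ≠ 0 := norm_pos_iff.mp hu0
  have hq0 : u ^ 2 ≠ 0 := pow_ne_zero 2 hu
  have hq1 : ‖u ^ 2‖ < 1 := by
    rw [norm_pow]
    exact pow_lt_one₀ (norm_nonneg u) hu1 two_ne_zero
  have hb : ‖(u ^ 2) ^ (-e + 1)‖ < 1 := by
    rw [norm_zpow]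
    exact zpow_lt_one₀ (norm_pos_iff.2 hq0) hq1 (by omega)
  have hsum := summable_norm_phi11Term hq0 hq1 hb (1 - e - m)
  have hE : -(((-e).toNat : ℕ) : ℤ) = e := by omega
  refine ⟨hsum, by simpa only [hE] using qPoch_zpow_neg_ne_zero hq0 hq1 (-e).toNat, ?_⟩
  have hshift : HasSum (fun n => tetTerm u m e (n + (-e).toNat))
      (u ^ (m * e) / qPoch ((u ^ 2) ^ e) (u ^ 2) (-e).toNat *
        ∑' n, phi11Term (u ^ 2) ((u ^ 2) ^ (-e + 1)) (1 - e - m) n) := by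
    simpa only [tetTerm_add_toNat_neg hu m he.le] using hsum.of_norm.hasSum.mul_left _
  refine ((hasSum_nat_add_iff' (-e).toNat).1 ?_).tsum_eq
  rwa [sum_eq_zero fun n hn => tetTerm_eq_zero_of_lt (mem_range.1 hn), sub_zero]
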